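/- arXiv:1301.7028 — 3 statements merged into one kernel-verified Lean document; each statement's English description precedes it below -/
import Mathlib

section
/- The anti-normal matrix elements satisfy ⟨r| a^n (a†)^m |s⟩ = q^{−C(n,2)/2 − C(m,2)/2 − (rn+sm)/2} · √(γ^{n+m}(q^{1+r};q)_n (q^{1+s};q)_m) · δ_{r+n, s+m}, where C(k,2) = k(k−1)/2 and a, a† act as a|n⟩ = √φ(n)|n−1⟩, a†|n⟩ = √φ(n+1)|n+1⟩. -/
/-- Annihilation operator: `(a f) n = √φ(n+1) f (n+1)`, i.e. `a|n⟩ = √φ(n)|n-1⟩`. -/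
noncomputable def aOp (φ : ℕ → ℝ) : Module.End ℂ (ℕ → ℂ) where
  toFun f := fun n => (Real.sqrt (φ (n + 1)) : ℂ) * f (n + 1)
  map_add' f g := by funext n; simp [mul_add]
  map_smul' c f := by funext n; simp [smul_eq_mul]; ring

/-- Creation operator: `a†|n⟩ = √φ(n+1)|n+1⟩`. -/
noncomputable def adOp (φ : ℕ → ℝ) : Module.End ℂ (ℕ → ℂ) where
  toFun f := fun n => if n = 0 then 0 else (Real.sqrt (φ n) : ℂ) * f (n - 1)
  map_add' f g := by
    funext n; by_cases h : n = 0 <;> simp [h, mul_add]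
  map_smul' c f := by
    funext n; by_cases h : n = 0 <;> simp [h, smul_eq_mul] <;> ring

/-- Shifted q-factorial `(x;q)_k`. -/
def pq (q x : ℝ) (k : ℕ) : ℝ := ∏ j ∈ Finset.range k, (1 - x * q ^ j)

/-!
`a†^m` sends `|s⟩` to a multiple of `|s+m⟩` and `(a^n f)(r)` only reads `f (r+n)`, so the matrix
element vanishes unless `r + n = s + m` and is otherwise a product of square roots of `φ`.
Since `φ j = γ q^{1-j} (1 - q^j)`, the product `∏_{j<n} φ(t+1+j)` telescopes to
`γ^n q^{-(t n + C(n,2))} (q^{t+1};q)_n`, and the two half-powers of `q` combine into the stated one.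
-/

open Finset

lemma aOp_apply (φ : ℕ → ℝ) (f : ℕ → ℂ) (n : ℕ) :
    aOp φ f n = (Real.sqrt (φ (n + 1)) : ℂ) * f (n + 1) := rfl

lemma adOp_single (φ : ℕ → ℝ) (k : ℕ) (c : ℂ) :
    adOp φ (Pi.single k c) = Pi.single (k + 1) ((Real.sqrt (φ (k + 1)) : ℂ) * c) := by
  funext n
  rcases n with _ | n
  · simp [adOp]
  · by_cases h : n = k
    · subst h; simp [adOp]
    · simp [adOp, h]

lemma adOp_pow_single (φ : ℕ → ℝ) (s m : ℕ) (c : ℂ) :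
    (adOp φ ^ m) (Pi.single s c) =
      Pi.single (s + m) (((∏ i ∈ range m, Real.sqrt (φ (s + 1 + i)) : ℝ) : ℂ) * c) := by
  induction m with
  | zero => simp
  | succ m ih =>
    rw [pow_succ', Module.End.mul_apply, ih, adOp_single, prod_range_succ, ← add_assoc,
      add_right_comm s 1 m]
    congr 1
    push_cast
    ring

lemma aOp_pow_apply (φ : ℕ → ℝ) (n : ℕ) (f : ℕ → ℂ) (r : ℕ) :
    (aOp φ ^ n) f r = ((∏ j ∈ range n, Real.sqrt (φ (r + 1 + j)) : ℝ) : ℂ) * f (r + n) := by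
  induction n generalizing f with
  | zero => simp
  | succ n ih =>
    rw [pow_succ, Module.End.mul_apply, ih, aOp_apply, prod_range_succ, add_right_comm r 1 n,
      ← add_assoc]
    push_cast
    ring

lemma pq_nonneg {q x : ℝ} (hq0 : 0 ≤ q) (hq1 : q ≤ 1) (hx : x ≤ 1) (n : ℕ) : 0 ≤ pq q x n := by
  refine prod_nonneg fun j _ => sub_nonneg.2 ?_
  rcases le_total x 0 with hx0 | hx0
  · exact (mul_nonpos_of_nonpos_of_nonneg hx0 (pow_nonneg hq0 j)).trans zero_le_one
  · exact mul_le_one₀ hx (pow_nonneg hq0 j) (pow_le_one₀ hq0 hq1)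

lemma phi_eq_gamma_mul_div_pow {l lam q γ : ℝ} {φ : ℕ → ℝ} (hq0 : 0 < q) (hq1 : q ≠ 1)
    (hφ : ∀ j : ℕ, φ j = l ^ 2 * q ^ lam * (1 - q ^ (-(j : ℝ))) / (q - 1))
    (hγ : γ = l ^ 2 * q ^ (lam - 1) / (1 - q)) (j : ℕ) :
    φ j = γ * q / q ^ j * (1 - q ^ j) := by
  have h1 : q - 1 ≠ 0 := sub_ne_zero.2 hq1
  have h2 : 1 - q ≠ 0 := sub_ne_zero.2 hq1.symm
  rw [hφ, hγ, Real.rpow_sub hq0, Real.rpow_one, Real.rpow_neg hq0.le, Real.rpow_natCast]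
  field_simp
  ring

section
variable {q γ : ℝ} {φ : ℕ → ℝ}

lemma prod_phi (hφ : ∀ j : ℕ, φ j = γ * q / q ^ j * (1 - q ^ j)) (hq : q ≠ 0) (t n : ℕ) :
    ∏ j ∈ range n, φ (t + 1 + j) = γ ^ n / q ^ (t * n + n.choose 2) * pq q (q ^ (t + 1)) n := by
  induction n with
  | zero => simp [pq]
  | succ n ih =>
    rw [prod_range_succ, ih, hφ, pq, pq, prod_range_succ, Nat.choose_succ_succ',
      Nat.choose_one_right]
    field_simp
    ring

lemma prod_sqrt_phi (hφ : ∀ j : ℕ, φ j = γ * q / q ^ j * (1 - q ^ j)) (hq0 : 0 < q) (hq1 : q ≤ 1)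
    (hγ : 0 ≤ γ) (t n : ℕ) :
    ∏ j ∈ range n, Real.sqrt (φ (t + 1 + j)) =
      q ^ (-((t * n + n.choose 2 : ℕ) : ℝ) / 2) * Real.sqrt (γ ^ n * pq q (q ^ (t + 1)) n) := by
  have hφ0 : ∀ j, 0 ≤ φ j := fun j => by
    rw [hφ]
    exact mul_nonneg (by positivity) (sub_nonneg.2 (pow_le_one₀ hq0.le hq1))
  have hsqrt :
      Real.sqrt ((q ^ (t * n + n.choose 2))⁻¹) = q ^ (-((t * n + n.choose 2 : ℕ) : ℝ) / 2) := by
    rw [Real.sqrt_eq_rpow, ← Real.rpow_natCast, ← Real.rpow_neg hq0.le, ← Real.rpow_mul hq0.le]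
    congr 1
    ring
  rw [← Real.sqrt_prod _ fun j _ => hφ0 _, prod_phi hφ hq0.ne', div_mul_eq_mul_div, div_eq_inv_mul,
    Real.sqrt_mul (by positivity), hsqrt]
end

lemma cast_mul_pred_eq_two_mul_choose (k : ℕ) : ((k * (k - 1) : ℕ) : ℝ) = 2 * k.choose 2 := by
  rw [Nat.cast_choose_two]
  rcases k with _ | k
  · simp
  · push_cast
    ring

theorem stmt12_general (l lam q : ℝ) (hq0 : 0 < q) (hq1 : q < 1)
    (φ : ℕ → ℝ)
    (hφ : ∀ j : ℕ, φ j = l ^ 2 * q ^ lam * (1 - q ^ (-(j : ℝ))) / (q - 1))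
    (γ : ℝ) (hγ : γ = l ^ 2 * q ^ (lam - 1) / (1 - q)) :
    ∀ r s n m : ℕ,
      ((aOp φ ^ n * adOp φ ^ m) (Pi.single s 1)) r =
        if r + n = s + m then
          ((q ^ (-((n * (n - 1) : ℕ) : ℝ) / 4 - ((m * (m - 1) : ℕ) : ℝ) / 4
              - ((r * n + s * m : ℕ) : ℝ) / 2) *
            Real.sqrt (γ ^ (n + m) * pq q (q ^ (r + 1)) n * pq q (q ^ (s + 1)) m) : ℝ) : ℂ)
        else 0 := by
  have hφ' := phi_eq_gamma_mul_div_pow hq0 hq1.ne hφ hγ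
  have hγ0 : 0 ≤ γ := by
    have := sub_pos.2 hq1
    rw [hγ]
    positivity
  have hpq (t k : ℕ) : 0 ≤ pq q (q ^ (t + 1)) k :=
    pq_nonneg hq0.le hq1.le (pow_le_one₀ hq0.le hq1.le) k
  intro r s n m
  rw [Module.End.mul_apply, adOp_pow_single, aOp_pow_apply, Pi.single_apply, mul_one]
  split_ifs
  · rw [← Complex.ofReal_mul, prod_sqrt_phi hφ' hq0 hq1.le hγ0, prod_sqrt_phi hφ' hq0 hq1.le hγ0,
      mul_mul_mul_comm, ← Real.rpow_add hq0,
      ← Real.sqrt_mul (mul_nonneg (pow_nonneg hγ0 n) (hpq r n))]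
    congr 2
    · rw [cast_mul_pred_eq_two_mul_choose, cast_mul_pred_eq_two_mul_choose]
      push_cast
      ring
    · ring
  · rw [mul_zero]

theorem stmt12 (l lam q : ℝ) (hl : l ≠ 0) (hq0 : 0 < q) (hq1 : q < 1)
    (φ : ℕ → ℝ)
    (hφ : ∀ j : ℕ, φ j = l ^ 2 * q ^ lam * (1 - q ^ (-(j : ℝ))) / (q - 1))
    (γ : ℝ) (hγ : γ = l ^ 2 * q ^ (lam - 1) / (1 - q)) :
    ∀ r s n m : ℕ,
      ((aOp φ ^ n * adOp φ ^ m) (Pi.single s 1)) r =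
        if r + n = s + m then
          ((q ^ (-((n * (n - 1) : ℕ) : ℝ) / 4 - ((m * (m - 1) : ℕ) : ℝ) / 4
              - ((r * n + s * m : ℕ) : ℝ) / 2) *
            Real.sqrt (γ ^ (n + m) * pq q (q ^ (r + 1)) n * pq q (q ^ (s + 1)) m) : ℝ) : ℂ)
        else 0 :=
  stmt12_general l lam q hq0 hq1 φ hφ γ hγ
end

section
/- For n < m the normal-ordered matrix elements satisfy ⟨r| (a†)^m a^n |s⟩ = (−q)^n (q^{−s};q)_n q^{−C(m−n,2)/2 − s(m−n)/2} √(γ^{m+n}(q^{1+s};q)_{m−n}) δ_{r, m−n+s}. -/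
lemma sqrt_prod' (f : ℕ → ℝ) (hf : ∀ i, 0 ≤ f i) (k : ℕ) :
    ∏ j ∈ Finset.range k, Real.sqrt (f j) = Real.sqrt (∏ j ∈ Finset.range k, f j) := by
  induction k with
  | zero => simp
  | succ k ih =>
      rw [Finset.prod_range_succ, Finset.prod_range_succ, ih,
        ← Real.sqrt_mul (Finset.prod_nonneg fun i _ => hf i)]

lemma aOp_pow (φ : ℕ → ℝ) (n : ℕ) (f : ℕ → ℂ) (r : ℕ) :
    (((aOp φ)^n) f) r = (∏ j ∈ Finset.range n, (Real.sqrt (φ (r+1+j)) : ℂ)) * f (r+n) := by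
  induction n generalizing f r with
  | zero => simp
  | succ n ih =>
      rw [pow_succ, Module.End.mul_apply, ih, Finset.prod_range_succ]
      have h1 : r + n + 1 = r + (n+1) := by omega
      have h2 : r + 1 + n = r + n + 1 := by omega
      simp only [aOp, LinearMap.coe_mk, AddHom.coe_mk, h1, h2]
      ring

lemma adOp_pow (φ : ℕ → ℝ) (m : ℕ) (f : ℕ → ℂ) (r : ℕ) :
    (((adOp φ)^m) f) r = if r < m then 0 else
      (∏ j ∈ Finset.range m, (Real.sqrt (φ (r-j)) : ℂ)) * f (r-m) := by
  induction m generalizing f r with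
  | zero => simp
  | succ m ih =>
      rw [pow_succ', Module.End.mul_apply]
      show (if r = 0 then 0 else (Real.sqrt (φ r) : ℂ) * ((((adOp φ)^m) f) (r-1))) = _
      rcases r with _ | t
      · simp
      · simp only [Nat.succ_ne_zero, if_false, Nat.add_sub_cancel]
        rw [ih]
        by_cases h : t < m
        · rw [if_pos h, if_pos (by omega), mul_zero]
        · rw [if_neg h, if_neg (by omega), Finset.prod_range_succ']
          have e1 : ∏ j ∈ Finset.range m, (Real.sqrt (φ (t+1-(j+1))) : ℂ)
              = ∏ j ∈ Finset.range m, (Real.sqrt (φ (t-j)) : ℂ) :=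
            Finset.prod_congr rfl (fun j _ => by rw [Nat.succ_sub_succ])
          have e2 : t+1-(m+1) = t - m := by omega
          rw [e1, e2, Nat.sub_zero]
          ring

lemma gauss2 (n : ℕ) : ((∑ j ∈ Finset.range n, j : ℕ) : ℤ) * 2 + n = n * n := by
  induction n with
  | zero => simp
  | succ k ih =>
      rw [Finset.sum_range_succ]
      push_cast at ih ⊢
      ring_nf
      ring_nf at ih
      linarith

theorem stmt13 (l lam q : ℝ) (hl : l ≠ 0) (hq0 : 0 < q) (hq1 : q < 1)
    (φ : ℕ → ℝ)
    (hφ : ∀ j : ℕ, φ j = l ^ 2 * q ^ lam * (1 - q ^ (-(j : ℝ))) / (q - 1))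
    (γ : ℝ) (hγ : γ = l ^ 2 * q ^ (lam - 1) / (1 - q)) :
    ∀ r s n m : ℕ, n < m →
      ((adOp φ ^ m * aOp φ ^ n) (Pi.single s 1)) r =
        if r = m - n + s then
          (((-q) ^ n * pq q ((q ^ s)⁻¹) n *
            q ^ (-(((m - n) * (m - n - 1) : ℕ) : ℝ) / 4 - ((s * (m - n) : ℕ) : ℝ) / 2) *
            Real.sqrt (γ ^ (m + n) * pq q (q ^ (s + 1)) (m - n)) : ℝ) : ℂ)
        else 0 := by
  intro r s n m hnm
  have hq : q ≠ 0 := ne_of_gt hq0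
  have hq1' : (0:ℝ) < 1 - q := by linarith
  have hγ0 : 0 < γ := by
    rw [hγ]
    have h1 : (0:ℝ) < l ^ 2 := by positivity
    have h2 : (0:ℝ) < q ^ (lam - 1) := Real.rpow_pos_of_pos hq0 _
    positivity
  have hφ' : ∀ k : ℕ, φ k = γ * q * ((q^k)⁻¹) * (1 - q^k) := by
    intro k
    have h1 : q ^ (-(k:ℝ)) = ((q^k)⁻¹ : ℝ) := by
      rw [Real.rpow_neg hq0.le, Real.rpow_natCast]
    have h2 : q ^ lam = q ^ (lam - 1) * q := by
      have := Real.rpow_add_one hq (lam - 1)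
      rw [sub_add_cancel] at this
      rw [this]
    rw [hφ, hγ, h1, h2]
    have hk : (q:ℝ)^k ≠ 0 := pow_ne_zero _ hq
    have h3 : q - 1 ≠ 0 := by linarith
    have h4 : (1:ℝ) - q ≠ 0 := by linarith
    field_simp
    ring
  have hφpos : ∀ k : ℕ, 0 ≤ φ k := by
    intro k
    rw [hφ']
    have h1 : q^k ≤ 1 := pow_le_one₀ hq0.le hq1.le
    have h2 : (0:ℝ) < (q^k)⁻¹ := by positivity
    nlinarith [mul_pos (mul_pos hγ0 hq0) h2]
  rw [Module.End.mul_apply, adOp_pow]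
  by_cases hrm : r < m
  · rw [if_pos hrm]
    by_cases hr : r = m - n + s
    · rw [if_pos hr]
      have hs : s < n := by omega
      have hz : pq q ((q^s)⁻¹) n = 0 := by
        apply Finset.prod_eq_zero (Finset.mem_range.2 hs)
        rw [inv_mul_cancel₀ (pow_ne_zero s hq)]
        ring
      rw [hz]
      push_cast
      ring
    · rw [if_neg hr]
  · rw [if_neg hrm, aOp_pow]
    by_cases hsingle : r - m + n = s
    · have hns : n ≤ s := by omega
      have hr : r = m - n + s := by omega
      rw [if_pos hr, Pi.single_apply, if_pos hsingle, mul_one]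
      rw [← Complex.ofReal_prod, ← Complex.ofReal_prod, ← Complex.ofReal_mul,
        Complex.ofReal_inj]
      set c := s - n + 1 with hcdef
      set d := m - n with hddef
      have hcn : c + n = s + 1 := by omega
      have hm' : m = n + d := by omega
      -- reindex products
      have P1 : ∏ j ∈ Finset.range m, Real.sqrt (φ (r-j))
          = ∏ j ∈ Finset.range m, Real.sqrt (φ (c+j)) := by
        rw [← Finset.prod_range_reflect (fun j => Real.sqrt (φ (c+j))) m]
        exact Finset.prod_congr rfl fun j hj => by
          have hj' := Finset.mem_range.1 hj
          rw [show r - j = c + (m - 1 - j) from by omega]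
      have P2 : ∏ j ∈ Finset.range n, Real.sqrt (φ (r-m+1+j))
          = ∏ j ∈ Finset.range n, Real.sqrt (φ (c+j)) :=
        Finset.prod_congr rfl fun j _ => by rw [show r - m + 1 + j = c + j from by omega]
      rw [P1, P2, sqrt_prod' (fun j => φ (c+j)) (fun j => hφpos _) m,
        sqrt_prod' (fun j => φ (c+j)) (fun j => hφpos _) n,
        ← Real.sqrt_mul (Finset.prod_nonneg fun i _ => hφpos _)]
      have hone : ∀ k : ℕ, q ^ k ≤ 1 := fun k => pow_le_one₀ hq0.le hq1.le
      have hpqc : ∀ k : ℕ, 0 ≤ pq q (q^c) k := fun k =>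
        Finset.prod_nonneg fun j _ => by
          rw [← pow_add]; exact sub_nonneg.2 (hone _)
      have hpqd : 0 ≤ pq q (q^(s+1)) d :=
        Finset.prod_nonneg fun j _ => by
          rw [← pow_add]; exact sub_nonneg.2 (hone _)
      -- rewrite pq q (q^s)⁻¹ n
      have hrefl : ∏ j ∈ Finset.range n, (1 - q^(s-j)) = pq q (q^c) n := by
        rw [pq, ← Finset.prod_range_reflect (fun j => (1 - q^(s-j))) n]
        exact Finset.prod_congr rfl fun j hj => by
          have hj' := Finset.mem_range.1 hj
          rw [← pow_add, show c + j = s - (n - 1 - j) from by omega]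
      have pqneg : pq q ((q^s)⁻¹) n
          = (-1)^n * (q^(∑ j ∈ Finset.range n, j) * ((q^s)^n)⁻¹ * pq q (q^c) n) := by
        have hfac : ∀ j ∈ Finset.range n, (1 - (q^s)⁻¹ * q^j)
            = (-1) * q^j * (q^s)⁻¹ * (1 - q^(s-j)) := by
          intro j hj
          have hj' := Finset.mem_range.1 hj
          have hsj : q^(s-j) * q^j = q^s := by rw [← pow_add]; congr 1; omega
          have hqs : (q:ℝ)^s ≠ 0 := pow_ne_zero _ hq
          field_simp
          linear_combination - hsj
        rw [pq, Finset.prod_congr rfl hfac, Finset.prod_mul_distrib,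
          Finset.prod_mul_distrib, Finset.prod_mul_distrib, Finset.prod_const,
          Finset.prod_const, Finset.card_range, Finset.prod_pow_eq_pow_sum, hrefl,
          inv_pow]
        ring
      have hsplit : pq q (q^c) m = pq q (q^c) n * pq q (q^(s+1)) d := by
        rw [hm', pq, Finset.prod_range_add, ← pq]
        congr 1
        exact Finset.prod_congr rfl fun j _ => by
          rw [← pow_add, ← pow_add, show c + (n+j) = (s+1)+j from by omega]
      have prodφ : ∀ k : ℕ, ∏ j ∈ Finset.range k, φ (c+j)
          = γ^k * q^k * ((q^c)^k * q^(∑ j ∈ Finset.range k, j))⁻¹ * pq q (q^c) k := by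
        intro k
        induction k with
        | zero => simp [pq]
        | succ k ih =>
            rw [Finset.prod_range_succ, ih, hφ' (c+k)]
            simp only [pq, Finset.prod_range_succ, Finset.sum_range_succ]
            have e1 : (q:ℝ)^(c+k) = q^c * q^k := pow_add q c k
            have e2 : (q:ℝ)^((∑ j ∈ Finset.range k, j) + k)
                = q^(∑ j ∈ Finset.range k, j) * q^k := pow_add q _ k
            have h5 : ((q:ℝ)^c)^k ≠ 0 := pow_ne_zero _ (pow_ne_zero _ hq)
            have h6 : (q:ℝ)^(∑ j ∈ Finset.range k, j) ≠ 0 := pow_ne_zero _ hq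
            have h7 : (q:ℝ)^k ≠ 0 := pow_ne_zero _ hq
            have h8 : (q:ℝ)^c ≠ 0 := pow_ne_zero _ hq
            rw [e1, e2]
            field_simp
            ring
      have hSm : (∑ j ∈ Finset.range m, j)
          = (∑ j ∈ Finset.range n, j) + n*d + (∑ j ∈ Finset.range d, j) := by
        rw [hm', Finset.sum_range_add, Finset.sum_add_distrib, Finset.sum_const,
          Finset.card_range, smul_eq_mul]
        ring
      have hexp : (m+n) + ((∑ j ∈ Finset.range d, j) + s*d + s*n*2)
          = (2*n + 2*(∑ j ∈ Finset.range n, j))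
            + (c*(m+n) + ((∑ j ∈ Finset.range m, j)+(∑ j ∈ Finset.range n, j))) := by
        have h2 := gauss2 n
        push_cast at h2
        zify at hSm hcn hm' ⊢
        linear_combination (-1:ℤ)*hSm + (-2:ℤ)*h2 + (-((m:ℤ)+n))*hcn + ((n:ℤ) - s)*hm'
      have hfrac : (q:ℝ)^(m+n)
            * (q^(c*(m+n) + ((∑ j ∈ Finset.range m, j)+(∑ j ∈ Finset.range n, j))))⁻¹
          = q^(2*n + 2*(∑ j ∈ Finset.range n, j))
            * (q^((∑ j ∈ Finset.range d, j) + s*d + s*n*2))⁻¹ := by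
        rw [inv_eq_one_div, inv_eq_one_div, mul_one_div, mul_one_div,
          div_eq_div_iff (pow_ne_zero _ hq) (pow_ne_zero _ hq), ← pow_add, ← pow_add,
          hexp]
      have hsq1 : ((-1:ℝ))^n * (-1:ℝ)^n = 1 := by
        rw [← pow_add]; exact Even.neg_one_pow ⟨n, rfl⟩
      have hA' : (-q)^n * pq q ((q^s)⁻¹) n
          = q^n * q^(∑ j ∈ Finset.range n, j) * ((q^s)^n)⁻¹ * pq q (q^c) n := by
        rw [pqneg, neg_pow]
        have h9 : (-1:ℝ)^n * q^n
              * ((-1)^n * (q^(∑ j ∈ Finset.range n, j) * ((q^s)^n)⁻¹ * pq q (q^c) n))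
            = ((-1:ℝ)^n * (-1)^n)
              * (q^n * q^(∑ j ∈ Finset.range n, j) * ((q^s)^n)⁻¹ * pq q (q^c) n) := by
          ring
        rw [h9, hsq1, one_mul]
      rw [hA']
      have hA'nn : 0 ≤ q^n * q^(∑ j ∈ Finset.range n, j) * ((q^s)^n)⁻¹ * pq q (q^c) n
          * q ^ (-((d * (d - 1) : ℕ) : ℝ) / 4 - ((s * d : ℕ) : ℝ) / 2) := by
        refine mul_nonneg (mul_nonneg ?_ (hpqc n)) (Real.rpow_nonneg hq0.le _)
        positivity
      have RHSeq : q^n * q^(∑ j ∈ Finset.range n, j) * ((q^s)^n)⁻¹ * pq q (q^c) n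
            * q ^ (-((d * (d - 1) : ℕ) : ℝ) / 4 - ((s * d : ℕ) : ℝ) / 2)
            * Real.sqrt (γ^(m+n) * pq q (q^(s+1)) d)
          = Real.sqrt ((q^n * q^(∑ j ∈ Finset.range n, j) * ((q^s)^n)⁻¹ * pq q (q^c) n
            * q ^ (-((d * (d - 1) : ℕ) : ℝ) / 4 - ((s * d : ℕ) : ℝ) / 2))^2
            * (γ^(m+n) * pq q (q^(s+1)) d)) := by
        rw [Real.sqrt_mul (sq_nonneg _), Real.sqrt_sq hA'nn]
      rw [RHSeq]
      congr 1
      have q2E : (q ^ (-((d * (d - 1) : ℕ) : ℝ) / 4 - ((s * d : ℕ) : ℝ) / 2))^(2:ℕ)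
          = (q ^ ((∑ j ∈ Finset.range d, j) + s*d))⁻¹ := by
        have hD2 : ((d*(d-1) : ℕ) : ℝ) = 2 * ((∑ j ∈ Finset.range d, j : ℕ) : ℝ) := by
          rw [← Finset.sum_range_id_mul_two d]; push_cast; ring
        rw [← Real.rpow_natCast (q ^ (-((d * (d - 1) : ℕ) : ℝ) / 4 - ((s * d : ℕ) : ℝ) / 2)) 2,
          ← Real.rpow_mul hq0.le,
          show (-((d * (d - 1) : ℕ) : ℝ) / 4 - ((s * d : ℕ) : ℝ) / 2) * ((2:ℕ):ℝ)
            = -((((∑ j ∈ Finset.range d, j) + s*d : ℕ)) : ℝ) from by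
              rw [hD2]; push_cast; ring,
          Real.rpow_neg hq0.le, Real.rpow_natCast]
      rw [prodφ m, prodφ n, hsplit, mul_pow, q2E]
      have expand_lhs : γ^m * q^m * ((q^c)^m * q^(∑ j ∈ Finset.range m, j))⁻¹
            * (pq q (q^c) n * pq q (q^(s+1)) d)
            * (γ^n * q^n * ((q^c)^n * q^(∑ j ∈ Finset.range n, j))⁻¹ * pq q (q^c) n)
          = (γ^(m+n) * (pq q (q^c) n)^2 * pq q (q^(s+1)) d)
            * ((q:ℝ)^(m+n)
              * (q^(c*(m+n) + ((∑ j ∈ Finset.range m, j)+(∑ j ∈ Finset.range n, j))))⁻¹) := by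
        have h5 : ((q:ℝ)^c)^m ≠ 0 := pow_ne_zero _ (pow_ne_zero _ hq)
        have h6 : ((q:ℝ)^c)^n ≠ 0 := pow_ne_zero _ (pow_ne_zero _ hq)
        have h7 : (q:ℝ)^(∑ j ∈ Finset.range m, j) ≠ 0 := pow_ne_zero _ hq
        have h8 : (q:ℝ)^(∑ j ∈ Finset.range n, j) ≠ 0 := pow_ne_zero _ hq
        field_simp
        ring
      have expand_rhs : (q^n * q^(∑ j ∈ Finset.range n, j) * ((q^s)^n)⁻¹ * pq q (q^c) n)^2
            * (q ^ ((∑ j ∈ Finset.range d, j) + s*d))⁻¹ * (γ^(m+n) * pq q (q^(s+1)) d)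
          = (γ^(m+n) * (pq q (q^c) n)^2 * pq q (q^(s+1)) d)
            * (q^(2*n + 2*(∑ j ∈ Finset.range n, j))
              * (q^((∑ j ∈ Finset.range d, j) + s*d + s*n*2))⁻¹) := by
        have h5 : ((q:ℝ)^s)^n ≠ 0 := pow_ne_zero _ (pow_ne_zero _ hq)
        have h8 : (q:ℝ)^(∑ j ∈ Finset.range n, j) ≠ 0 := pow_ne_zero _ hq
        have h9 : (q:ℝ)^((∑ j ∈ Finset.range d, j) + s*d) ≠ 0 := pow_ne_zero _ hq
        field_simp
        ring
      rw [expand_lhs, expand_rhs, hfrac]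
    · rw [Pi.single_apply, if_neg hsingle, mul_zero, mul_zero,
        if_neg (by omega : ¬ r = m - n + s)]
end

section
/- For the coherent-state quantization A_{z z̄} = ∫ |z|² |z⟩⟨z| dμ(z̄,z) (with the measure resolving the identity), one obtains A_{z z̄} = a a† = φ(N+1), i.e. A_{z z̄}|n⟩ = φ(n+1)|n⟩; consequently the spectrum of the quantized |z|² is {φ(n+1) : n ≥ 0}. Equivalently, given the resolution of identity ∫ dμ |z⟩⟨z| = 1 with diagonal matrix elements ∫ dμ |z|² ⟨n|z⟩⟨z|n'⟩ determined by moments ∫ dμ |z|^{2k} N(|z|²)^{−1} = γ^k q^{−k(k−1)/2}(q;q)_k, prove that the operator with matrix elements ∫ dμ |z|² ⟨n|z⟩⟨z|n'⟩ is diagonal with eigenvalue φ(n+1) on |n⟩. -/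
/-!
A rotation-invariant measure kills the off-diagonal entries: rotating by a unit `w` with
`w ^ n * conj w ^ n' = -1` flips the sign of the integrand. On the diagonal the integrand is
`c n ^ 2 * ‖z‖ ^ (2 * (n + 1)) / N (‖z‖ ^ 2)`, and since `c n ^ 2` is the reciprocal of the `n`-th
moment, the entry is the ratio of consecutive moments, `γ * q ^ (-n) * (1 - q ^ (n + 1)) = φ (n + 1)`.
-/

open MeasureTheory ComplexConjugate

theorem MeasurableEquiv.measurePreserving_withDensity_comp {α β : Type*} [MeasurableSpace α]
    [MeasurableSpace β] {μ : Measure α} {ν : Measure β} {e : α ≃ᵐ β}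
    (he : MeasurePreserving e μ ν) (f : β → ENNReal) :
    MeasurePreserving e (μ.withDensity (f ∘ e)) (ν.withDensity f) := by
  refine ⟨e.measurable, Measure.ext fun s hs => ?_⟩
  rw [Measure.map_apply e.measurable hs, withDensity_apply _ (e.measurable hs),
    withDensity_apply _ hs]
  exact he.setLIntegral_comp_preimage_emb e.measurableEmbedding f s

theorem integral_eq_zero_of_comp_eq_neg {α E : Type*} [MeasurableSpace α]
    [NormedAddCommGroup E] [NormedSpace ℝ E] {μ : Measure α} {e : α ≃ᵐ α}
    (he : MeasurePreserving e μ μ) {F : α → E} (hF : ∀ x, F (e x) = -F x) :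
    ∫ x, F x ∂μ = 0 := by
  have h := he.integral_comp' F
  simp only [hF, integral_neg] at h
  linear_combination (norm := module) (-2⁻¹ : ℝ) • h

theorem measurePreserving_rotation_withDensity_norm (f : ℝ → ENNReal) (w : Circle) :
    MeasurePreserving (rotation w) (volume.withDensity fun z : ℂ => f ‖z‖)
      (volume.withDensity fun z : ℂ => f ‖z‖) := by
  have hvol : MeasurePreserving (rotation w) volume volume := (rotation w).measurePreserving
  have h := MeasurableEquiv.measurePreserving_withDensity_comp
    (e := (rotation w).toHomeomorph.toMeasurableEquiv) hvol (fun z : ℂ => f ‖z‖)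
  have hf : (fun z : ℂ => f ‖z‖) ∘ (rotation w).toHomeomorph.toMeasurableEquiv =
      fun z => f ‖z‖ := by
    ext z
    simp [Circle.norm_coe]
  rwa [hf] at h

theorem exists_circle_pow_mul_conj_pow_eq_neg_one {n n' : ℕ} (h : n ≠ n') :
    ∃ w : Circle, (w : ℂ) ^ n * conj (w : ℂ) ^ n' = -1 := by
  have hne : (n : ℂ) - n' ≠ 0 := sub_ne_zero.2 (by exact_mod_cast h)
  refine ⟨Circle.exp (Real.pi / (n - n')), ?_⟩
  rw [← Circle.coe_inv_eq_conj, ← Circle.coe_pow, ← Circle.coe_pow, ← Circle.coe_mul,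
    ← Circle.exp_neg, ← Circle.exp_natCast_mul, ← Circle.exp_natCast_mul, ← Circle.exp_add,
    Circle.coe_exp, ← Complex.exp_pi_mul_I]
  congr 1
  push_cast
  field_simp
  ring

theorem pow_choose_two_succ {M : Type*} [Monoid M] (q : M) (n : ℕ) :
    q ^ (n + 1).choose 2 = q ^ n.choose 2 * q ^ n := by
  rw [Nat.choose_succ_succ', Nat.choose_one_right, add_comm, pow_add]

theorem rpow_mul_inv_sqrt_sq {q x : ℝ} (hq : 0 < q) (hx : 0 ≤ x) (n : ℕ) :
    (q ^ ((n * (n - 1) : ℝ) / 4) * (√x)⁻¹) ^ 2 = q ^ n.choose 2 / x := by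
  rw [mul_pow, inv_pow, Real.sq_sqrt hx, ← Real.rpow_mul_natCast hq.le, ← Real.rpow_natCast,
    Nat.cast_choose_two, div_eq_mul_inv]
  ring_nf

theorem prod_one_sub_pow_succ_pos {q : ℝ} (hq0 : 0 ≤ q) (hq1 : q < 1) (n : ℕ) :
    0 < ∏ k ∈ Finset.range n, (1 - q ^ (k + 1)) :=
  Finset.prod_pos fun k _ => sub_pos.2 (pow_lt_one₀ hq0 hq1 k.succ_ne_zero)

theorem coeff_sq_mul_moment_succ {l lam q γ : ℝ} {φ qp c : ℕ → ℝ} (hl : l ≠ 0) (hq0 : 0 < q)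
    (hq1 : q < 1) (hγ : γ = l ^ 2 * q ^ (lam - 1) / (1 - q))
    (hφ : ∀ j : ℕ, φ j = l ^ 2 * q ^ lam * (1 - q ^ (-(j : ℝ))) / (q - 1))
    (hqp : ∀ n : ℕ, qp n = ∏ k ∈ Finset.range n, (1 - q ^ (k + 1)))
    (hc : ∀ n : ℕ, c n = q ^ ((n * (n - 1) : ℝ) / 4) * (Real.sqrt (γ ^ n * qp n))⁻¹) (n : ℕ) :
    c n ^ 2 * (γ ^ (n + 1) * (q ^ (n + 1).choose 2)⁻¹ * qp (n + 1)) = φ (n + 1) := by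
  have hγ_pos : 0 < γ := by
    have : 0 < 1 - q := sub_pos.2 hq1
    rw [hγ]
    positivity
  have hqp_pos : 0 < qp n := hqp n ▸ prod_one_sub_pow_succ_pos hq0.le hq1 n
  have hc_sq : c n ^ 2 = q ^ n.choose 2 / (γ ^ n * qp n) :=
    hc n ▸ rpow_mul_inv_sqrt_sq hq0 (by positivity) n
  have hqp_succ : qp (n + 1) = qp n * (1 - q ^ (n + 1)) := by
    rw [hqp, hqp, Finset.prod_range_succ]
  have hφ_succ : φ (n + 1) = γ * (1 - q ^ (n + 1)) / q ^ n := by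
    rw [hφ, hγ, Real.rpow_sub hq0, Real.rpow_one, Real.rpow_neg hq0.le, Nat.cast_succ,
      Real.rpow_add_one hq0.ne', Real.rpow_natCast]
    have : q - 1 ≠ 0 := by linarith
    have : 1 - q ≠ 0 := by linarith
    field_simp
    ring
  rw [hc_sq, hqp_succ, hφ_succ, pow_choose_two_succ, pow_succ]
  field_simp

theorem integral_norm_mul_pow_mul_conj_pow_eq_zero {μ : Measure ℂ}
    (hμ : ∀ w : Circle, MeasurePreserving (rotation w) μ μ) (g : ℝ → ℂ) {n n' : ℕ}
    (h : n ≠ n') : ∫ z, g ‖z‖ * (z ^ n * conj z ^ n') ∂μ = 0 := by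
  obtain ⟨w, hw⟩ := exists_circle_pow_mul_conj_pow_eq_neg_one h
  refine integral_eq_zero_of_comp_eq_neg (e := (rotation w).toHomeomorph.toMeasurableEquiv)
    (hμ w) fun z => ?_
  change g ‖(w : ℂ) * z‖ * (((w : ℂ) * z) ^ n * conj ((w : ℂ) * z) ^ n') = _
  rw [norm_mul, Circle.norm_coe, one_mul, map_mul, mul_pow, mul_pow]
  linear_combination (g ‖z‖ * z ^ n * conj z ^ n') * hw

theorem stmt19_general (l lam q : ℝ) (hl : l ≠ 0) (hq0 : 0 < q) (hq1 : q < 1)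
    (γ : ℝ) (hγ : γ = l ^ 2 * q ^ (lam - 1) / (1 - q))
    (φ : ℕ → ℝ)
    (hφ : ∀ j : ℕ, φ j = l ^ 2 * q ^ lam * (1 - q ^ (-(j : ℝ))) / (q - 1))
    (qp : ℕ → ℝ) (hqp : ∀ n : ℕ, qp n = ∏ k ∈ Finset.range n, (1 - q ^ (k + 1)))
    (Nf : ℝ → ℝ)
    (c : ℕ → ℝ)
    (hc : ∀ n : ℕ, c n = q ^ ((n * (n - 1) : ℝ) / 4) * (Real.sqrt (γ ^ n * qp n))⁻¹)
    (h : ℝ → ℝ)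
    (μ : Measure ℂ)
    (hμ : μ = volume.withDensity (fun z => ENNReal.ofReal (h (‖z‖ ^ 2))))
    (hmom : ∀ k : ℕ,
      (∫ z : ℂ, ‖z‖ ^ (2 * k) / Nf (‖z‖ ^ 2) ∂μ)
        = γ ^ k * (q ^ (k * (k - 1) / 2))⁻¹ * qp k) :
    ∀ n n' : ℕ,
      (∫ z : ℂ, ((‖z‖ ^ 2 : ℝ) : ℂ) * ((c n : ℝ) : ℂ) * z ^ n *
          (starRingEnd ℂ) (((c n' : ℝ) : ℂ) * z ^ n') /
          ((Nf (‖z‖ ^ 2) : ℝ) : ℂ) ∂μ)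
        = if n = n' then ((φ (n + 1) : ℝ) : ℂ) else 0 := by
  intro n n'
  have hrot (w : Circle) : MeasurePreserving (rotation w) μ μ :=
    hμ ▸ measurePreserving_rotation_withDensity_norm (fun r => ENNReal.ofReal (h (r ^ 2))) w
  set g : ℝ → ℂ := fun r => ((c n * c n' * (r ^ 2 / Nf (r ^ 2)) : ℝ) : ℂ)
  have hg (z : ℂ) : ((‖z‖ ^ 2 : ℝ) : ℂ) * ((c n : ℝ) : ℂ) * z ^ n *
      conj (((c n' : ℝ) : ℂ) * z ^ n') / ((Nf (‖z‖ ^ 2) : ℝ) : ℂ) =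
      g ‖z‖ * (z ^ n * conj z ^ n') := by
    simp only [g, map_mul, map_pow, Complex.conj_ofReal]
    push_cast
    ring
  simp only [hg]
  split_ifs with hnn
  · subst hnn
    calc ∫ z, g ‖z‖ * (z ^ n * conj z ^ n) ∂μ
        = ∫ z, ((c n ^ 2 * (‖z‖ ^ (2 * (n + 1)) / Nf (‖z‖ ^ 2)) : ℝ) : ℂ) ∂μ := by
          congr 1 with z
          rw [← mul_pow, Complex.mul_conj']
          simp only [g]
          push_cast
          ring
      _ = ((c n ^ 2 * ∫ z, ‖z‖ ^ (2 * (n + 1)) / Nf (‖z‖ ^ 2) ∂μ : ℝ) : ℂ) := by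
          rw [← integral_const_mul]
          exact integral_ofReal
      _ = φ (n + 1) := by
          rw [hmom, ← Nat.choose_two_right,
            coeff_sq_mul_moment_succ hl hq0 hq1 hγ hφ hqp hc n]
  · exact integral_norm_mul_pow_mul_conj_pow_eq_zero hrot g hnn

theorem stmt19 (l lam q : ℝ) (hl : l ≠ 0) (hq0 : 0 < q) (hq1 : q < 1)
    (γ : ℝ) (hγ : γ = l ^ 2 * q ^ (lam - 1) / (1 - q))
    (φ : ℕ → ℝ)
    (hφ : ∀ j : ℕ, φ j = l ^ 2 * q ^ lam * (1 - q ^ (-(j : ℝ))) / (q - 1))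
    (qp : ℕ → ℝ) (hqp : ∀ n : ℕ, qp n = ∏ k ∈ Finset.range n, (1 - q ^ (k + 1)))
    (Nf : ℝ → ℝ)
    (hN : ∀ t : ℝ, Nf t = ∑' n : ℕ, q ^ (n * (n - 1) / 2) * t ^ n / (γ ^ n * qp n))
    (c : ℕ → ℝ)
    (hc : ∀ n : ℕ, c n = q ^ ((n * (n - 1) : ℝ) / 4) * (Real.sqrt (γ ^ n * qp n))⁻¹)
    (h : ℝ → ℝ) (hh : ∀ t, 0 ≤ h t)
    (μ : Measure ℂ)
    (hμ : μ = volume.withDensity (fun z => ENNReal.ofReal (h (‖z‖ ^ 2))))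
    (hmom : ∀ k : ℕ,
      (∫ z : ℂ, ‖z‖ ^ (2 * k) / Nf (‖z‖ ^ 2) ∂μ)
        = γ ^ k * (q ^ (k * (k - 1) / 2))⁻¹ * qp k) :
    ∀ n n' : ℕ,
      (∫ z : ℂ, ((‖z‖ ^ 2 : ℝ) : ℂ) * ((c n : ℝ) : ℂ) * z ^ n *
          (starRingEnd ℂ) (((c n' : ℝ) : ℂ) * z ^ n') /
          ((Nf (‖z‖ ^ 2) : ℝ) : ℂ) ∂μ)
        = if n = n' then ((φ (n + 1) : ℝ) : ℂ) else 0 :=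
  stmt19_general l lam q hl hq0 hq1 γ hγ φ hφ qp hqp Nf c hc h μ hμ hmom
end
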